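/- arXiv:1502.01251 — 2 statements merged into one kernel-verified Lean document; each statement's English description precedes it below -/
import Mathlib

section
/- Let 0 ≤ σ < π/18 and set v_j = (cos(π/6 + σ + jπ/3), sin(π/6 + σ + jπ/3)) for j = 0,…,5. For every set A ⊆ H with Metric.diam A ≤ 1, there exists k ∈ Fin 6 such that the rotation ρ about the origin by angle kπ/3 satisfies: ρ '' A ⊆ H, ρ '' A is disjoint from {x : ⟪x, v_0⟫ > 1/2}, and ρ '' A is disjoint from {x : ⟪x, v_2⟫ > 1/2}. (That is, any set of diameter at most 1 inside the hexagon can be rotated by a multiple of 60° so as to avoid the interiors of the two designated triangles of H ∖ H'_σ.) -/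
open Real RealInnerProductSpace

noncomputable section

local notation "ℝ²" => EuclideanSpace ℝ (Fin 2)

/-- The point of the plane with the given coordinates. -/
def pt (a b : ℝ) : ℝ² := (WithLp.equiv 2 (Fin 2 → ℝ)).symm ![a, b]

/-- The outward unit normals of the sides of the regular hexagon. -/
def u (k : Fin 6) : ℝ² := pt (Real.cos ((k : ℕ) * π / 3)) (Real.sin ((k : ℕ) * π / 3))

/-- The closed regular hexagon with inradius `1/2` centered at the origin. -/
def Hex : Set ℝ² := {x | ∀ k : Fin 6, ⟪x, u k⟫ ≤ 1 / 2}

/-- The outward unit normals of the sides of the hexagon rotated by `π/6 + σ`. -/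
def v (σ : ℝ) (j : Fin 6) : ℝ² :=
  pt (Real.cos (π / 6 + σ + (j : ℕ) * π / 3)) (Real.sin (π / 6 + σ + (j : ℕ) * π / 3))

/-- Rotation of the plane about the origin by the angle `θ`. -/
def rot (θ : ℝ) (x : ℝ²) : ℝ² :=
  pt (Real.cos θ * x 0 - Real.sin θ * x 1) (Real.sin θ * x 0 + Real.cos θ * x 1)

/-! A set of diameter at most 1 cannot meet two opposite triangles `⟪x, v⟫ > 1/2` and
`⟪x, -v⟫ > 1/2`, so for every `j` it avoids the triangle `j` or the triangle `j + 3`. Among six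
cyclically arranged triangles with this property there are two avoided ones at distance 2, and
a rotation by a multiple of `60°`, which preserves the hexagon and permutes the triangles
cyclically, brings them to positions `0` and `2`. -/

lemma inner_sub_inner_le_diam_mul_norm {E : Type*} [NormedAddCommGroup E]
    [InnerProductSpace ℝ E] {A : Set E} (hA : Bornology.IsBounded A) {x y : E} (hx : x ∈ A)
    (hy : y ∈ A) (w : E) : ⟪x, w⟫ - ⟪y, w⟫ ≤ Metric.diam A * ‖w‖ :=
  calc ⟪x, w⟫ - ⟪y, w⟫ = ⟪x - y, w⟫ := (inner_sub_left x y w).symm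
    _ ≤ ‖x - y‖ * ‖w‖ := real_inner_le_norm _ _
    _ ≤ Metric.diam A * ‖w‖ := by
      gcongr
      rw [← dist_eq_norm]
      exact Metric.dist_le_diam_of_mem hA hx hy

lemma Fin.exists_and_add_two_of_forall_or_add_three (P : Fin 6 → Prop)
    (h : ∀ j, P j ∨ P (j + 3)) : ∃ j, P j ∧ P (j + 2) := by
  classical
  -- a statement about the 64 Boolean predicates on `Fin 6`, checked by the kernel
  have key : ∀ b : Fin 6 → Bool, (∀ j, b j ∨ b (j + 3)) → ∃ j, b j ∧ b (j + 2) := by decide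
  simpa using key (fun j => decide (P j)) (by simpa using h)

def dir (α : ℝ) : ℝ² := pt (Real.cos α) (Real.sin α)

lemma inner_pt (x : ℝ²) (a b : ℝ) : ⟪x, pt a b⟫ = x 0 * a + x 1 * b := by
  simp [pt, PiLp.inner_apply, Fin.sum_univ_two, mul_comm]

lemma norm_sq_eq_sq_add_sq (x : ℝ²) : ‖x‖ ^ 2 = x 0 ^ 2 + x 1 ^ 2 := by
  simp [EuclideanSpace.real_norm_sq_eq, Fin.sum_univ_two]

lemma norm_dir (α : ℝ) : ‖dir α‖ = 1 := by
  refine (pow_eq_one_iff_of_nonneg (norm_nonneg _) two_ne_zero).1 ?_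
  rw [norm_sq_eq_sq_add_sq]
  simp [dir, pt]

lemma dir_add_pi (α : ℝ) : dir (α + π) = -dir α := by
  ext i
  fin_cases i <;> simp [dir, pt, cos_add_pi, sin_add_pi]

lemma dir_add_nat_mul_two_pi (α : ℝ) (n : ℕ) : dir (α + n * (2 * π)) = dir α := by
  simp only [dir, cos_add_nat_mul_two_pi, sin_add_nat_mul_two_pi]

lemma inner_rot_dir (θ α : ℝ) (x : ℝ²) : ⟪rot θ x, dir α⟫ = ⟪x, dir (α - θ)⟫ := by
  simp only [rot, dir, inner_pt, cos_sub, sin_sub]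
  simp [pt]
  ring

def hexNormal (β : ℝ) (j : Fin 6) : ℝ² := dir (β + (j : ℕ) * π / 3)

lemma norm_hexNormal (β : ℝ) (j : Fin 6) : ‖hexNormal β j‖ = 1 := norm_dir _

lemma u_eq_hexNormal : u = hexNormal 0 := by
  ext1 k
  simp [u, hexNormal, dir]

lemma v_eq_hexNormal (σ : ℝ) : v σ = hexNormal (π / 6 + σ) := rfl

lemma hexNormal_add (β : ℝ) (j k : Fin 6) :
    hexNormal β (j + k) = dir (β + (j : ℕ) * π / 3 + (k : ℕ) * π / 3) := by
  set n := (j : ℕ) + k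
  have hn : ((j + k : Fin 6) : ℕ) = n % 6 := Fin.val_add j k
  calc hexNormal β (j + k) = dir (β + (n % 6 : ℕ) * π / 3 + (n / 6 : ℕ) * (2 * π)) := by
        rw [dir_add_nat_mul_two_pi, hexNormal, hn]
    _ = dir (β + (j : ℕ) * π / 3 + (k : ℕ) * π / 3) := by
        congr 1
        have h := congrArg (fun m : ℕ => (m : ℝ)) (Nat.mod_add_div n 6)
        push_cast [n] at h ⊢
        linear_combination (π / 3) * h

lemma hexNormal_add_three (β : ℝ) (j : Fin 6) : hexNormal β (j + 3) = -hexNormal β j := by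
  rw [hexNormal_add, hexNormal, ← dir_add_pi]
  norm_num

lemma inner_rot_hexNormal_add (β : ℝ) (j k : Fin 6) (x : ℝ²) :
    ⟪rot ((k : ℕ) * π / 3) x, hexNormal β (j + k)⟫ = ⟪x, hexNormal β j⟫ := by
  rw [hexNormal_add, inner_rot_dir, add_sub_cancel_right, hexNormal]

lemma hex_subset_closedBall : Hex ⊆ Metric.closedBall 0 1 := by
  intro x hx
  have hu0 : u 0 = pt 1 0 := by simp [u]
  have hu1 : u 1 = pt (1 / 2) (√3 / 2) := by simp [u]
  have h0 := hx 0
  have h1 := hx 1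
  have h3 := hx (0 + 3)
  have h4 := hx (1 + 3)
  rw [u_eq_hexNormal, hexNormal_add_three, inner_neg_right, ← u_eq_hexNormal] at h3 h4
  rw [hu0, inner_pt] at h0 h3
  rw [hu1, inner_pt] at h1 h4
  have hsq : √3 ^ 2 = 3 := Real.sq_sqrt (by norm_num)
  have hx1 : x 1 ^ 2 ≤ 3 / 4 := by nlinarith
  rw [mem_closedBall_zero_iff, ← abs_norm, ← sq_le_one_iff_abs_le_one, norm_sq_eq_sq_add_sq]
  nlinarith

lemma isBounded_hex : Bornology.IsBounded Hex :=
  Metric.isBounded_closedBall.subset hex_subset_closedBall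

lemma rot_image_subset_hex {A : Set ℝ²} (hA : A ⊆ Hex) (k : Fin 6) :
    rot ((k : ℕ) * π / 3) '' A ⊆ Hex := by
  rintro _ ⟨x, hx, rfl⟩ i
  rw [← sub_add_cancel i k, u_eq_hexNormal, inner_rot_hexNormal_add, ← u_eq_hexNormal]
  exact hA hx _

lemma disjoint_rot_image_iff (σ : ℝ) (A : Set ℝ²) (j k : Fin 6) :
    Disjoint (rot ((k : ℕ) * π / 3) '' A) {x | 1 / 2 < ⟪x, v σ (j + k)⟫} ↔
      ∀ x ∈ A, ⟪x, v σ j⟫ ≤ 1 / 2 := by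
  simp [Set.disjoint_left, v_eq_hexNormal, inner_rot_hexNormal_add]

theorem exists_rotation_avoiding_two_triangles_general (σ : ℝ)
    (A : Set ℝ²) (hA : A ⊆ Hex) (hdiam : Metric.diam A ≤ 1) :
    ∃ k : Fin 6,
      rot ((k : ℕ) * π / 3) '' A ⊆ Hex ∧
      Disjoint (rot ((k : ℕ) * π / 3) '' A) {x | 1 / 2 < ⟪x, v σ 0⟫} ∧
      Disjoint (rot ((k : ℕ) * π / 3) '' A) {x | 1 / 2 < ⟪x, v σ 2⟫} := by
  have hopp : ∀ j, (∀ x ∈ A, ⟪x, v σ j⟫ ≤ 1 / 2) ∨ ∀ y ∈ A, ⟪y, v σ (j + 3)⟫ ≤ 1 / 2 := by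
    by_contra! ⟨j, ⟨x, hx, hxj⟩, ⟨y, hy, hyj⟩⟩
    have hw := inner_sub_inner_le_diam_mul_norm (isBounded_hex.subset hA) hx hy (v σ j)
    rw [v_eq_hexNormal, hexNormal_add_three, inner_neg_right] at hyj
    rw [v_eq_hexNormal, norm_hexNormal] at hw
    rw [v_eq_hexNormal] at hxj
    linarith
  obtain ⟨j, hj0, hj2⟩ := Fin.exists_and_add_two_of_forall_or_add_three _ hopp
  refine ⟨-j, rot_image_subset_hex hA _, ?_, ?_⟩
  · rw [show (0 : Fin 6) = j + -j by simp]
    exact (disjoint_rot_image_iff σ A j _).2 hj0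
  · rw [show (2 : Fin 6) = j + 2 + -j by abel]
    exact (disjoint_rot_image_iff σ A _ _).2 hj2

/-- Any subset of the hexagon of diameter at most 1 can be rotated by a multiple of `60°`
so as to avoid the interiors of the two designated triangles of `H \ H'_σ`. -/
theorem exists_rotation_avoiding_two_triangles (σ : ℝ) (hσ0 : 0 ≤ σ) (hσ1 : σ < π / 18)
    (A : Set ℝ²) (hA : A ⊆ Hex) (hdiam : Metric.diam A ≤ 1) :
    ∃ k : Fin 6,
      rot ((k : ℕ) * π / 3) '' A ⊆ Hex ∧
      Disjoint (rot ((k : ℕ) * π / 3) '' A) {x | 1 / 2 < ⟪x, v σ 0⟫} ∧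
      Disjoint (rot ((k : ℕ) * π / 3) '' A) {x | 1 / 2 < ⟪x, v σ 2⟫} :=
  exists_rotation_avoiding_two_triangles_general σ A hA hdiam
end
end

section
/- For every real x with 0 ≤ x ≤ 2 − √3, the number y = (1 − √3·x − √(1 − 2√3·x − x²))/2 satisfies 0 ≤ y ≤ x and the quadratic relation ((√3·y)/2 + x)² + (1 − y/2)² = 1. -/
/-!
Expanding with `√3² = 3`, the relation says that `y` is a root of
`Y² - (1 - √3·x)·Y + x² = 0`, and the formula picks the smaller root. The discriminant
`1 - 2√3·x - x²` factors as `(2 - √3 - x)(2 + √3 + x)`, which is where the bound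
`x ≤ 2 - √3` comes from. The two roots are nonnegative with product `x²`, so the smaller
one has square at most `x²`.
-/

open Real

noncomputable def smallerRoot (b c : ℝ) : ℝ := (b - √(b ^ 2 - 4 * c)) / 2

lemma smallerRoot_mul_sub {b c : ℝ} (h : 0 ≤ b ^ 2 - 4 * c) :
    smallerRoot b c * (b - smallerRoot b c) = c := by
  have hsq := sq_sqrt h
  unfold smallerRoot
  linear_combination (-1 / 4 : ℝ) * hsq

lemma smallerRoot_le_sub_self (b c : ℝ) : smallerRoot b c ≤ b - smallerRoot b c := by
  have := sqrt_nonneg (b ^ 2 - 4 * c)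
  unfold smallerRoot
  linarith

lemma smallerRoot_nonneg {b c : ℝ} (hb : 0 ≤ b) (hc : 0 ≤ c) : 0 ≤ smallerRoot b c := by
  have : √(b ^ 2 - 4 * c) ≤ b :=
    calc √(b ^ 2 - 4 * c) ≤ √(b ^ 2) := sqrt_le_sqrt (by linarith)
      _ = b := sqrt_sq hb
  unfold smallerRoot
  linarith

lemma smallerRoot_sq_le {b c : ℝ} (h : 0 ≤ b ^ 2 - 4 * c) (hb : 0 ≤ b) (hc : 0 ≤ c) :
    smallerRoot b c ^ 2 ≤ c :=
  calc smallerRoot b c ^ 2 = smallerRoot b c * smallerRoot b c := sq _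
    _ ≤ smallerRoot b c * (b - smallerRoot b c) :=
      mul_le_mul_of_nonneg_left (smallerRoot_le_sub_self b c) (smallerRoot_nonneg hb hc)
    _ = c := smallerRoot_mul_sub h

/-- One step of Hansen's recursion: if `0 ≤ x ≤ 2 - √3` then
`y = (1 - √3·x - √(1 - 2√3·x - x²))/2` satisfies `0 ≤ y ≤ x` and the quadratic relation
`((√3·y)/2 + x)² + (1 - y/2)² = 1`. -/
theorem hansen_recursion_step (x y : ℝ) (hx0 : 0 ≤ x) (hx1 : x ≤ 2 - Real.sqrt 3)
    (hy : y = (1 - Real.sqrt 3 * x - Real.sqrt (1 - 2 * Real.sqrt 3 * x - x ^ 2)) / 2) :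
    0 ≤ y ∧ y ≤ x ∧ (Real.sqrt 3 * y / 2 + x) ^ 2 + (1 - y / 2) ^ 2 = 1 := by
  have hs : √3 ^ 2 = 3 := sq_sqrt (by norm_num)
  have hs2 : √3 ≤ 2 := by nlinarith [sqrt_nonneg 3]
  have hdisc : (1 - √3 * x) ^ 2 - 4 * x ^ 2 = 1 - 2 * √3 * x - x ^ 2 := by
    linear_combination x ^ 2 * hs
  have hdisc_factor : 1 - 2 * √3 * x - x ^ 2 = (2 - √3 - x) * (2 + √3 + x) := by
    linear_combination hs
  have hdisc_nonneg : 0 ≤ (1 - √3 * x) ^ 2 - 4 * x ^ 2 := by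
    rw [hdisc, hdisc_factor]
    exact mul_nonneg (by linarith) (by positivity)
  have hb : 0 ≤ 1 - √3 * x := by nlinarith [mul_le_mul_of_nonneg_left hx1 (sqrt_nonneg 3)]
  have hc : 0 ≤ x ^ 2 := sq_nonneg x
  have hy_root : y = smallerRoot (1 - √3 * x) (x ^ 2) := by rw [hy, smallerRoot, hdisc]
  have hmul : y * (1 - √3 * x - y) = x ^ 2 := hy_root ▸ smallerRoot_mul_sub hdisc_nonneg
  have hy0 : 0 ≤ y := hy_root ▸ smallerRoot_nonneg hb hc
  have hy_sq : y ^ 2 ≤ x ^ 2 := hy_root ▸ smallerRoot_sq_le hdisc_nonneg hb hc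
  refine ⟨hy0, (pow_le_pow_iff_left₀ hy0 hx0 two_ne_zero).1 hy_sq, ?_⟩
  linear_combination (-1) * hmul + (y ^ 2 / 4) * hs
end
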